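/- There exists a subgroup H of Ḡ of index 15 such that the range of the natural homomorphism Ḡ → Equiv.Perm (Ḡ ⧸ H) given by left multiplication on the cosets is isomorphic (as a group) to the alternating group A₇ on seven letters (this is the case whose coset geometry is the projective space PG(3,2)). -/

import Mathlib

set_option maxRecDepth 8000
set_option maxHeartbeats 1600000

namespace Stmt13

def a : FreeGroup (Fin 2) := FreeGroup.of 0
def b : FreeGroup (Fin 2) := FreeGroup.of 1

/-- The two relators of `π₁(W̄) = ⟨a,b | a³b²AB³Ab², (ab)²aB²Ab²AB²⟩`. -/
def rels : Set (FreeGroup (Fin 2)) :=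
  { a^3 * b^2 * a⁻¹ * (b⁻¹)^3 * a⁻¹ * b^2,
    (a * b)^2 * a * (b⁻¹)^2 * a⁻¹ * b^2 * a⁻¹ * (b⁻¹)^2 }

/-- The fundamental group `Ḡ = π₁(W̄)` of the manifold mediating the Akbulut h-cobordism. -/
abbrev Gbar := PresentedGroup rels

open Equiv Pointwise

/-! ### Explicit permutations -/

def pa : Equiv.Perm (Fin 7) := ⟨![0,2,1,4,5,6,3], ![0,2,1,6,3,4,5], by decide, by decide⟩
def pb : Equiv.Perm (Fin 7) := ⟨![1,3,2,5,0,4,6], ![4,0,2,1,5,3,6], by decide, by decide⟩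
def px : Equiv.Perm (Fin 7) := ⟨![1,2,3,0,5,4,6], ![3,0,1,2,5,4,6], by decide, by decide⟩
def py : Equiv.Perm (Fin 7) := ⟨![2,1,0,3,5,4,6], ![2,1,0,3,5,4,6], by decide, by decide⟩
def pu : Equiv.Perm (Fin 7) := ⟨![1,2,0,3,4,5,6], ![2,0,1,3,4,5,6], by decide, by decide⟩
def pv : Equiv.Perm (Fin 7) := ⟨![0,1,2,4,5,3,6], ![0,1,2,5,3,4,6], by decide, by decide⟩

def f : Fin 2 → Equiv.Perm (Fin 7) := ![pa, pb]

theorem hrels : ∀ r ∈ rels, FreeGroup.lift f r = 1 := by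
  intro r hr
  simp only [rels, Set.mem_insert_iff, Set.mem_singleton_iff] at hr
  rcases hr with rfl | rfl <;>
  · simp only [Stmt13.a, Stmt13.b, map_mul, map_pow, map_inv, FreeGroup.lift_apply_of]
    decide

/-- The homomorphism `Ḡ →* S₇` sending the generators to `pa`, `pb`. -/
def φ : Gbar →* Equiv.Perm (Fin 7) := PresentedGroup.toGroup hrels

def e0 : Gbar := PresentedGroup.of 0
def e1 : Gbar := PresentedGroup.of 1

theorem phi_e0 : φ e0 = pa := by simp [φ, e0, f]
theorem phi_e1 : φ e1 = pb := by simp [φ, e1, f]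

/-! ### The Fano plane and its orbit -/

def lines : Finset (Finset (Fin 7)) := {{0,1,3},{0,2,6},{0,4,5},{1,2,4},{1,5,6},{2,3,5},{3,4,6}}

def P1 : Finset (Finset (Fin 7)) := {{0,1,3},{0,2,4},{0,5,6},{1,2,5},{1,4,6},{2,3,6},{3,4,5}}
def P2 : Finset (Finset (Fin 7)) := {{0,1,4},{0,2,3},{0,5,6},{1,2,6},{1,3,5},{2,4,5},{3,4,6}}
def P3 : Finset (Finset (Fin 7)) := {{0,1,5},{0,2,6},{0,3,4},{1,2,3},{1,4,6},{2,4,5},{3,5,6}}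
def P4 : Finset (Finset (Fin 7)) := {{0,1,4},{0,2,5},{0,3,6},{1,2,3},{1,5,6},{2,4,6},{3,4,5}}
def P5 : Finset (Finset (Fin 7)) := {{0,1,5},{0,2,4},{0,3,6},{1,2,6},{1,3,4},{2,3,5},{4,5,6}}
def P6 : Finset (Finset (Fin 7)) := {{0,1,2},{0,3,6},{0,4,5},{1,3,5},{1,4,6},{2,3,4},{2,5,6}}
def P7 : Finset (Finset (Fin 7)) := {{0,1,6},{0,2,3},{0,4,5},{1,2,5},{1,3,4},{2,4,6},{3,5,6}}
def P8 : Finset (Finset (Fin 7)) := {{0,1,2},{0,3,4},{0,5,6},{1,3,6},{1,4,5},{2,3,5},{2,4,6}}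
def P9 : Finset (Finset (Fin 7)) := {{0,1,6},{0,2,5},{0,3,4},{1,2,4},{1,3,5},{2,3,6},{4,5,6}}
def P10 : Finset (Finset (Fin 7)) := {{0,1,2},{0,3,5},{0,4,6},{1,3,4},{1,5,6},{2,3,6},{2,4,5}}
def P11 : Finset (Finset (Fin 7)) := {{0,1,4},{0,2,6},{0,3,5},{1,2,5},{1,3,6},{2,3,4},{4,5,6}}
def P12 : Finset (Finset (Fin 7)) := {{0,1,5},{0,2,3},{0,4,6},{1,2,4},{1,3,6},{2,5,6},{3,4,5}}
def P13 : Finset (Finset (Fin 7)) := {{0,1,6},{0,2,4},{0,3,5},{1,2,3},{1,4,5},{2,5,6},{3,4,6}}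
def P14 : Finset (Finset (Fin 7)) := {{0,1,3},{0,2,5},{0,4,6},{1,2,6},{1,4,5},{2,3,4},{3,5,6}}

def S15 : Finset (Finset (Finset (Fin 7))) := {lines, P1, P2, P3, P4, P5, P6, P7, P8, P9, P10, P11, P12, P13, P14}

theorem mem0 : lines ∈ S15 := Finset.mem_insert_self _ _
theorem mem1 : P1 ∈ S15 := Finset.mem_insert_of_mem (Finset.mem_insert_self _ _)
theorem mem2 : P2 ∈ S15 := Finset.mem_insert_of_mem (Finset.mem_insert_of_mem (Finset.mem_insert_self _ _))
theorem mem3 : P3 ∈ S15 := Finset.mem_insert_of_mem (Finset.mem_insert_of_mem (Finset.mem_insert_of_mem (Finset.mem_insert_self _ _)))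
theorem mem4 : P4 ∈ S15 := Finset.mem_insert_of_mem (Finset.mem_insert_of_mem (Finset.mem_insert_of_mem (Finset.mem_insert_of_mem (Finset.mem_insert_self _ _))))
theorem mem5 : P5 ∈ S15 := Finset.mem_insert_of_mem (Finset.mem_insert_of_mem (Finset.mem_insert_of_mem (Finset.mem_insert_of_mem (Finset.mem_insert_of_mem (Finset.mem_insert_self _ _)))))
theorem mem6 : P6 ∈ S15 := Finset.mem_insert_of_mem (Finset.mem_insert_of_mem (Finset.mem_insert_of_mem (Finset.mem_insert_of_mem (Finset.mem_insert_of_mem (Finset.mem_insert_of_mem (Finset.mem_insert_self _ _))))))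
theorem mem7 : P7 ∈ S15 := Finset.mem_insert_of_mem (Finset.mem_insert_of_mem (Finset.mem_insert_of_mem (Finset.mem_insert_of_mem (Finset.mem_insert_of_mem (Finset.mem_insert_of_mem (Finset.mem_insert_of_mem (Finset.mem_insert_self _ _)))))))
theorem mem8 : P8 ∈ S15 := Finset.mem_insert_of_mem (Finset.mem_insert_of_mem (Finset.mem_insert_of_mem (Finset.mem_insert_of_mem (Finset.mem_insert_of_mem (Finset.mem_insert_of_mem (Finset.mem_insert_of_mem (Finset.mem_insert_of_mem (Finset.mem_insert_self _ _))))))))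
theorem mem9 : P9 ∈ S15 := Finset.mem_insert_of_mem (Finset.mem_insert_of_mem (Finset.mem_insert_of_mem (Finset.mem_insert_of_mem (Finset.mem_insert_of_mem (Finset.mem_insert_of_mem (Finset.mem_insert_of_mem (Finset.mem_insert_of_mem (Finset.mem_insert_of_mem (Finset.mem_insert_self _ _)))))))))
theorem mem10 : P10 ∈ S15 := Finset.mem_insert_of_mem (Finset.mem_insert_of_mem (Finset.mem_insert_of_mem (Finset.mem_insert_of_mem (Finset.mem_insert_of_mem (Finset.mem_insert_of_mem (Finset.mem_insert_of_mem (Finset.mem_insert_of_mem (Finset.mem_insert_of_mem (Finset.mem_insert_of_mem (Finset.mem_insert_self _ _))))))))))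
theorem mem11 : P11 ∈ S15 := Finset.mem_insert_of_mem (Finset.mem_insert_of_mem (Finset.mem_insert_of_mem (Finset.mem_insert_of_mem (Finset.mem_insert_of_mem (Finset.mem_insert_of_mem (Finset.mem_insert_of_mem (Finset.mem_insert_of_mem (Finset.mem_insert_of_mem (Finset.mem_insert_of_mem (Finset.mem_insert_of_mem (Finset.mem_insert_self _ _)))))))))))
theorem mem12 : P12 ∈ S15 := Finset.mem_insert_of_mem (Finset.mem_insert_of_mem (Finset.mem_insert_of_mem (Finset.mem_insert_of_mem (Finset.mem_insert_of_mem (Finset.mem_insert_of_mem (Finset.mem_insert_of_mem (Finset.mem_insert_of_mem (Finset.mem_insert_of_mem (Finset.mem_insert_of_mem (Finset.mem_insert_of_mem (Finset.mem_insert_of_mem (Finset.mem_insert_self _ _))))))))))))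
theorem mem13 : P13 ∈ S15 := Finset.mem_insert_of_mem (Finset.mem_insert_of_mem (Finset.mem_insert_of_mem (Finset.mem_insert_of_mem (Finset.mem_insert_of_mem (Finset.mem_insert_of_mem (Finset.mem_insert_of_mem (Finset.mem_insert_of_mem (Finset.mem_insert_of_mem (Finset.mem_insert_of_mem (Finset.mem_insert_of_mem (Finset.mem_insert_of_mem (Finset.mem_insert_of_mem (Finset.mem_insert_self _ _)))))))))))))
theorem mem14 : P14 ∈ S15 := Finset.mem_insert_of_mem (Finset.mem_insert_of_mem (Finset.mem_insert_of_mem (Finset.mem_insert_of_mem (Finset.mem_insert_of_mem (Finset.mem_insert_of_mem (Finset.mem_insert_of_mem (Finset.mem_insert_of_mem (Finset.mem_insert_of_mem (Finset.mem_insert_of_mem (Finset.mem_insert_of_mem (Finset.mem_insert_of_mem (Finset.mem_insert_of_mem (Finset.mem_insert_of_mem (Finset.mem_singleton_self _))))))))))))))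

theorem hpa_S15 : ∀ x ∈ S15, pa • x ∈ S15 := by
  intro x hx
  simp only [S15, Finset.mem_insert, Finset.mem_singleton] at hx
  rcases hx with rfl|rfl|rfl|rfl|rfl|rfl|rfl|rfl|rfl|rfl|rfl|rfl|rfl|rfl|rfl
  · rw [show pa • lines = P1 from by decide]; exact mem1
  · rw [show pa • P1 = P5 from by decide]; exact mem5
  · rw [show pa • P2 = P4 from by decide]; exact mem4
  · rw [show pa • P3 = lines from by decide]; exact mem0
  · rw [show pa • P4 = P9 from by decide]; exact mem9
  · rw [show pa • P5 = P3 from by decide]; exact mem3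
  · rw [show pa • P6 = P8 from by decide]; exact mem8
  · rw [show pa • P7 = P2 from by decide]; exact mem2
  · rw [show pa • P8 = P6 from by decide]; exact mem6
  · rw [show pa • P9 = P7 from by decide]; exact mem7
  · rw [show pa • P10 = P10 from by decide]; exact mem10
  · rw [show pa • P11 = P14 from by decide]; exact mem14
  · rw [show pa • P12 = P11 from by decide]; exact mem11
  · rw [show pa • P13 = P12 from by decide]; exact mem12
  · rw [show pa • P14 = P13 from by decide]; exact mem13

theorem hpb_S15 : ∀ x ∈ S15, pb • x ∈ S15 := by
  intro x hx
  simp only [S15, Finset.mem_insert, Finset.mem_singleton] at hx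
  rcases hx with rfl|rfl|rfl|rfl|rfl|rfl|rfl|rfl|rfl|rfl|rfl|rfl|rfl|rfl|rfl
  · rw [show pb • lines = P2 from by decide]; exact mem2
  · rw [show pb • P1 = P6 from by decide]; exact mem6
  · rw [show pb • P2 = P1 from by decide]; exact mem1
  · rw [show pb • P3 = P5 from by decide]; exact mem5
  · rw [show pb • P4 = lines from by decide]; exact mem0
  · rw [show pb • P5 = P10 from by decide]; exact mem10
  · rw [show pb • P6 = P4 from by decide]; exact mem4
  · rw [show pb • P7 = P11 from by decide]; exact mem11
  · rw [show pb • P8 = P3 from by decide]; exact mem3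
  · rw [show pb • P9 = P12 from by decide]; exact mem12
  · rw [show pb • P10 = P13 from by decide]; exact mem13
  · rw [show pb • P11 = P14 from by decide]; exact mem14
  · rw [show pb • P12 = P7 from by decide]; exact mem7
  · rw [show pb • P13 = P8 from by decide]; exact mem8
  · rw [show pb • P14 = P9 from by decide]; exact mem9

theorem hpainv_S15 : ∀ x ∈ S15, pa⁻¹ • x ∈ S15 := by
  intro x hx
  simp only [S15, Finset.mem_insert, Finset.mem_singleton] at hx
  rcases hx with rfl|rfl|rfl|rfl|rfl|rfl|rfl|rfl|rfl|rfl|rfl|rfl|rfl|rfl|rfl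
  · rw [show pa⁻¹ • lines = P3 from by decide]; exact mem3
  · rw [show pa⁻¹ • P1 = lines from by decide]; exact mem0
  · rw [show pa⁻¹ • P2 = P7 from by decide]; exact mem7
  · rw [show pa⁻¹ • P3 = P5 from by decide]; exact mem5
  · rw [show pa⁻¹ • P4 = P2 from by decide]; exact mem2
  · rw [show pa⁻¹ • P5 = P1 from by decide]; exact mem1
  · rw [show pa⁻¹ • P6 = P8 from by decide]; exact mem8
  · rw [show pa⁻¹ • P7 = P9 from by decide]; exact mem9
  · rw [show pa⁻¹ • P8 = P6 from by decide]; exact mem6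
  · rw [show pa⁻¹ • P9 = P4 from by decide]; exact mem4
  · rw [show pa⁻¹ • P10 = P10 from by decide]; exact mem10
  · rw [show pa⁻¹ • P11 = P12 from by decide]; exact mem12
  · rw [show pa⁻¹ • P12 = P13 from by decide]; exact mem13
  · rw [show pa⁻¹ • P13 = P14 from by decide]; exact mem14
  · rw [show pa⁻¹ • P14 = P11 from by decide]; exact mem11

theorem hpbinv_S15 : ∀ x ∈ S15, pb⁻¹ • x ∈ S15 := by
  intro x hx
  simp only [S15, Finset.mem_insert, Finset.mem_singleton] at hx
  rcases hx with rfl|rfl|rfl|rfl|rfl|rfl|rfl|rfl|rfl|rfl|rfl|rfl|rfl|rfl|rfl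
  · rw [show pb⁻¹ • lines = P4 from by decide]; exact mem4
  · rw [show pb⁻¹ • P1 = P2 from by decide]; exact mem2
  · rw [show pb⁻¹ • P2 = lines from by decide]; exact mem0
  · rw [show pb⁻¹ • P3 = P8 from by decide]; exact mem8
  · rw [show pb⁻¹ • P4 = P6 from by decide]; exact mem6
  · rw [show pb⁻¹ • P5 = P3 from by decide]; exact mem3
  · rw [show pb⁻¹ • P6 = P1 from by decide]; exact mem1
  · rw [show pb⁻¹ • P7 = P12 from by decide]; exact mem12
  · rw [show pb⁻¹ • P8 = P13 from by decide]; exact mem13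
  · rw [show pb⁻¹ • P9 = P14 from by decide]; exact mem14
  · rw [show pb⁻¹ • P10 = P5 from by decide]; exact mem5
  · rw [show pb⁻¹ • P11 = P7 from by decide]; exact mem7
  · rw [show pb⁻¹ • P12 = P9 from by decide]; exact mem9
  · rw [show pb⁻¹ • P13 = P10 from by decide]; exact mem10
  · rw [show pb⁻¹ • P14 = P11 from by decide]; exact mem11


theorem lift_smul_S15 : ∀ (w : FreeGroup (Fin 2)), ∀ x ∈ S15, (FreeGroup.lift f w) • x ∈ S15 := by
  intro w
  induction w using FreeGroup.induction_on with
  | C1 => intro x hx; rw [map_one, one_smul]; exact hx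
  | of i =>
      intro x hx
      rw [show FreeGroup.lift f (FreeGroup.of i) = f i from FreeGroup.lift_apply_of]
      fin_cases i
      · exact hpa_S15 x hx
      · exact hpb_S15 x hx
  | inv_of i _ =>
      intro x hx
      rw [map_inv, show FreeGroup.lift f (FreeGroup.of i) = f i from FreeGroup.lift_apply_of]
      fin_cases i
      · exact hpainv_S15 x hx
      · exact hpbinv_S15 x hx
  | mul w1 w2 h1 h2 =>
      intro x hx
      rw [map_mul, mul_smul]
      exact h1 _ (h2 x hx)

/-- The action of `Ḡ` on configurations of lines, through `φ`. -/
instance actG : MulAction Gbar (Finset (Finset (Fin 7))) := MulAction.compHom _ φ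

theorem smul_def (g : Gbar) (x : Finset (Finset (Fin 7))) : g • x = φ g • x := rfl

theorem orbit_sub : ∀ (g : Gbar), ∀ x ∈ S15, g • x ∈ S15 := by
  intro g
  refine PresentedGroup.induction_on (C := fun g => ∀ x ∈ S15, g • x ∈ S15) g ?_
  intro z
  exact lift_smul_S15 z

theorem orbit_eq : MulAction.orbit Gbar lines = ↑S15 := by
  apply Set.Subset.antisymm
  · rintro _ ⟨g, rfl⟩
    exact Finset.mem_coe.mpr (orbit_sub g lines mem0)
  · intro x hx
    rw [Finset.mem_coe] at hx
    simp only [S15, Finset.mem_insert, Finset.mem_singleton] at hx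
    rcases hx with rfl|rfl|rfl|rfl|rfl|rfl|rfl|rfl|rfl|rfl|rfl|rfl|rfl|rfl|rfl
    · exact MulAction.mem_orbit_self lines
    · exact MulAction.mem_orbit_iff.mpr ⟨e0, by show φ (e0) • lines = P1; rw [show φ (e0) = pa from by simp [φ, e0, e1, f]]; decide⟩
    · exact MulAction.mem_orbit_iff.mpr ⟨e1, by show φ (e1) • lines = P2; rw [show φ (e1) = pb from by simp [φ, e0, e1, f]]; decide⟩
    · exact MulAction.mem_orbit_iff.mpr ⟨e0⁻¹, by show φ (e0⁻¹) • lines = P3; rw [show φ (e0⁻¹) = pa⁻¹ from by simp [φ, e0, e1, f]]; decide⟩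
    · exact MulAction.mem_orbit_iff.mpr ⟨e1⁻¹, by show φ (e1⁻¹) • lines = P4; rw [show φ (e1⁻¹) = pb⁻¹ from by simp [φ, e0, e1, f]]; decide⟩
    · exact MulAction.mem_orbit_iff.mpr ⟨e0 * e0, by show φ (e0 * e0) • lines = P5; rw [show φ (e0 * e0) = pa * pa from by simp [φ, e0, e1, f]]; decide⟩
    · exact MulAction.mem_orbit_iff.mpr ⟨e1 * e0, by show φ (e1 * e0) • lines = P6; rw [show φ (e1 * e0) = pb * pa from by simp [φ, e0, e1, f]]; decide⟩
    · exact MulAction.mem_orbit_iff.mpr ⟨e0⁻¹ * e1, by show φ (e0⁻¹ * e1) • lines = P7; rw [show φ (e0⁻¹ * e1) = pa⁻¹ * pb from by simp [φ, e0, e1, f]]; decide⟩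
    · exact MulAction.mem_orbit_iff.mpr ⟨e1⁻¹ * e0⁻¹, by show φ (e1⁻¹ * e0⁻¹) • lines = P8; rw [show φ (e1⁻¹ * e0⁻¹) = pb⁻¹ * pa⁻¹ from by simp [φ, e0, e1, f]]; decide⟩
    · exact MulAction.mem_orbit_iff.mpr ⟨e0 * e1⁻¹, by show φ (e0 * e1⁻¹) • lines = P9; rw [show φ (e0 * e1⁻¹) = pa * pb⁻¹ from by simp [φ, e0, e1, f]]; decide⟩
    · exact MulAction.mem_orbit_iff.mpr ⟨e1 * e0 * e0, by show φ (e1 * e0 * e0) • lines = P10; rw [show φ (e1 * e0 * e0) = pb * pa * pa from by simp [φ, e0, e1, f]]; decide⟩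
    · exact MulAction.mem_orbit_iff.mpr ⟨e1 * e0⁻¹ * e1, by show φ (e1 * e0⁻¹ * e1) • lines = P11; rw [show φ (e1 * e0⁻¹ * e1) = pb * pa⁻¹ * pb from by simp [φ, e0, e1, f]]; decide⟩
    · exact MulAction.mem_orbit_iff.mpr ⟨e1⁻¹ * e0⁻¹ * e1, by show φ (e1⁻¹ * e0⁻¹ * e1) • lines = P12; rw [show φ (e1⁻¹ * e0⁻¹ * e1) = pb⁻¹ * pa⁻¹ * pb from by simp [φ, e0, e1, f]]; decide⟩
    · exact MulAction.mem_orbit_iff.mpr ⟨e1⁻¹ * e1⁻¹ * e0⁻¹, by show φ (e1⁻¹ * e1⁻¹ * e0⁻¹) • lines = P13; rw [show φ (e1⁻¹ * e1⁻¹ * e0⁻¹) = pb⁻¹ * pb⁻¹ * pa⁻¹ from by simp [φ, e0, e1, f]]; decide⟩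
    · exact MulAction.mem_orbit_iff.mpr ⟨e1⁻¹ * e0 * e1⁻¹, by show φ (e1⁻¹ * e0 * e1⁻¹) • lines = P14; rw [show φ (e1⁻¹ * e0 * e1⁻¹) = pb⁻¹ * pa * pb⁻¹ from by simp [φ, e0, e1, f]]; decide⟩

/-- The index-15 subgroup: the stabilizer of the Fano plane. -/
def H : Subgroup Gbar := MulAction.stabilizer Gbar lines

theorem H_index : H.index = 15 := by
  rw [H, MulAction.index_stabilizer, orbit_eq, Set.ncard_coe_finset]
  decide

/-! ### Fixing enough planes forces the identity -/

theorem fix_planes (p : Equiv.Perm (Fin 7))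
    (h0 : p • lines = lines)
    (h1 : p • (pa • lines) = pa • lines)
    (h2 : p • (pa⁻¹ • lines) = pa⁻¹ • lines)
    (h3 : p • ((pb * pa) • lines) = (pb * pa) • lines)
    (h4 : p • ((pa * pb⁻¹) • lines) = (pa * pb⁻¹) • lines)
    (h5 : p • (pb⁻¹ • lines) = pb⁻¹ • lines)
    (h6 : p • ((pa * pa) • lines) = (pa * pa) • lines)
    (h7 : p • (pb • lines) = pb • lines) : p = 1 := by
  have key : ∀ (s t : Finset (Finset (Fin 7))) (l : Finset (Fin 7)), p • s = s → p • t = t →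
      s ∩ t = {l} → p • l = l := by
    intro s t l hs ht hst
    have h : p • (s ∩ t) = s ∩ t := by rw [Finset.smul_finset_inter, hs, ht]
    rw [hst, Finset.smul_finset_singleton] at h
    exact Finset.singleton_inj.mp h
  have key2 : ∀ (l m : Finset (Fin 7)) (i : Fin 7), p • l = l → p • m = m →
      l ∩ m = {i} → p i = i := by
    intro l m i hl hm hlm
    have h : p • (l ∩ m) = l ∩ m := by rw [Finset.smul_finset_inter, hl, hm]
    rw [hlm, Finset.smul_finset_singleton] at h
    exact Finset.singleton_inj.mp h
  have L013 := key _ _ {0,1,3} h0 h1 (by decide)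
  have L026 := key _ _ {0,2,6} h0 h2 (by decide)
  have L045 := key _ _ {0,4,5} h0 h3 (by decide)
  have L124 := key _ _ {1,2,4} h0 h4 (by decide)
  have L156 := key _ _ {1,5,6} h0 h5 (by decide)
  have L235 := key _ _ {2,3,5} h0 h6 (by decide)
  have P0 := key2 _ _ 0 L013 L026 (by decide)
  have P1 := key2 _ _ 1 L013 L124 (by decide)
  have P2 := key2 _ _ 2 L026 L124 (by decide)
  have P3 := key2 _ _ 3 L013 L235 (by decide)
  have P4 := key2 _ _ 4 L045 L124 (by decide)
  have P5 := key2 _ _ 5 L045 L156 (by decide)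
  have P6 := key2 _ _ 6 L026 L156 (by decide)
  ext i
  fin_cases i
  · simp [P0]
  · simp [P1]
  · simp [P2]
  · simp [P3]
  · simp [P4]
  · simp [P5]
  · simp [P6]

/-! ### Kernel of the coset action -/

theorem ker_eq : (MulAction.toPermHom Gbar (Gbar ⧸ H)).ker = φ.ker := by
  ext g
  constructor
  · intro hg
    rw [MonoidHom.mem_ker] at hg ⊢
    have hfix : ∀ x : Gbar, φ g • (φ x • lines) = φ x • lines := by
      intro x
      have h1 : g • (QuotientGroup.mk x : Gbar ⧸ H) = QuotientGroup.mk x := by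
        have h := Equiv.ext_iff.mp hg (QuotientGroup.mk x)
        simpa using h
      have h1' : (QuotientGroup.mk (g * x) : Gbar ⧸ H) = QuotientGroup.mk x := by
        rw [← smul_eq_mul, ← MulAction.Quotient.smul_mk]
        exact h1
      have h2 : (g * x)⁻¹ * x ∈ H := QuotientGroup.eq.mp h1'
      have h2' : ((g * x)⁻¹ * x) • lines = lines := MulAction.mem_stabilizer_iff.mp h2
      rw [smul_def] at h2'
      have h3 : ((φ g * φ x)⁻¹ * φ x) • lines = lines := by
        rwa [map_mul, map_inv, map_mul] at h2'
      rw [mul_smul] at h3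
      have h4 := congrArg (fun s => (φ g * φ x) • s) h3
      simp only [smul_inv_smul] at h4
      rw [← mul_smul]
      exact h4.symm
    apply fix_planes
    · have := hfix 1; simpa using this
    · have := hfix e0; rwa [phi_e0] at this
    · have := hfix e0⁻¹; rwa [map_inv, phi_e0] at this
    · have := hfix (e1 * e0); rwa [map_mul, phi_e0, phi_e1] at this
    · have := hfix (e0 * e1⁻¹); rwa [map_mul, map_inv, phi_e0, phi_e1] at this
    · have := hfix e1⁻¹; rwa [map_inv, phi_e1] at this
    · have := hfix (e0 * e0); rwa [map_mul, phi_e0] at this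
    · have := hfix e1; rwa [phi_e1] at this
  · intro hg
    rw [MonoidHom.mem_ker] at hg ⊢
    apply Equiv.ext
    intro q
    refine QuotientGroup.induction_on q ?_
    intro x
    show g • (QuotientGroup.mk x : Gbar ⧸ H) = QuotientGroup.mk x
    rw [MulAction.Quotient.smul_mk, smul_eq_mul, QuotientGroup.eq]
    show ((g * x)⁻¹ * x) • lines = lines
    rw [smul_def]
    have hone : φ ((g * x)⁻¹ * x) = 1 := by
      rw [map_mul, map_inv, map_mul, hg]
      group
    rw [hone, one_smul]

/-! ### The image of `φ` is the alternating group -/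

theorem lift_mem_alternating : ∀ w : FreeGroup (Fin 2),
    FreeGroup.lift f w ∈ alternatingGroup (Fin 7) := by
  intro w
  induction w using FreeGroup.induction_on with
  | C1 => rw [map_one]; exact Subgroup.one_mem _
  | of i =>
      rw [show FreeGroup.lift f (FreeGroup.of i) = f i from FreeGroup.lift_apply_of]
      fin_cases i
      · exact (show pa ∈ alternatingGroup (Fin 7) by
          rw [Equiv.Perm.mem_alternatingGroup]; decide)
      · exact (show pb ∈ alternatingGroup (Fin 7) by
          rw [Equiv.Perm.mem_alternatingGroup]; decide)
  | inv_of i _ =>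
      rw [map_inv]
      refine inv_mem ?_
      rw [show FreeGroup.lift f (FreeGroup.of i) = f i from FreeGroup.lift_apply_of]
      fin_cases i
      · exact (show pa ∈ alternatingGroup (Fin 7) by
          rw [Equiv.Perm.mem_alternatingGroup]; decide)
      · exact (show pb ∈ alternatingGroup (Fin 7) by
          rw [Equiv.Perm.mem_alternatingGroup]; decide)
  | mul w1 w2 h1 h2 => rw [map_mul]; exact mul_mem h1 h2

def F8 : Finset (Equiv.Perm (Fin 7)) := {1, px, px^2, px^3, py, px*py, px^2*py, px^3*py}
def F9 : Finset (Equiv.Perm (Fin 7)) := {1, pu, pu^2, pv, pu*pv, pu^2*pv, pv^2, pu*pv^2, pu^2*pv^2}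

def Q8 : Subgroup (Equiv.Perm (Fin 7)) where
  carrier := ↑F8
  one_mem' := Finset.mem_coe.mpr (by decide)
  mul_mem' := by
    intro x y hx hy
    have hx' : x ∈ F8 := Finset.mem_coe.mp hx
    have hy' : y ∈ F8 := Finset.mem_coe.mp hy
    refine Finset.mem_coe.mpr ?_
    fin_cases hx' <;> fin_cases hy' <;> decide
  inv_mem' := by
    intro x hx
    have hx' : x ∈ F8 := Finset.mem_coe.mp hx
    refine Finset.mem_coe.mpr ?_
    fin_cases hx' <;> decide

def Q9 : Subgroup (Equiv.Perm (Fin 7)) where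
  carrier := ↑F9
  one_mem' := Finset.mem_coe.mpr (by decide)
  mul_mem' := by
    intro x y hx hy
    have hx' : x ∈ F9 := Finset.mem_coe.mp hx
    have hy' : y ∈ F9 := Finset.mem_coe.mp hy
    refine Finset.mem_coe.mpr ?_
    fin_cases hx' <;> fin_cases hy' <;> decide
  inv_mem' := by
    intro x hx
    have hx' : x ∈ F9 := Finset.mem_coe.mp hx
    refine Finset.mem_coe.mpr ?_
    fin_cases hx' <;> decide

theorem card_Q8 : Nat.card Q8 = 8 := by
  have h : Nat.card Q8 = Nat.card {x // x ∈ F8} :=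
    Nat.card_congr (Equiv.subtypeEquivRight (fun x => Iff.rfl))
  rw [h, Nat.card_eq_finsetCard]
  decide

theorem card_Q9 : Nat.card Q9 = 9 := by
  have h : Nat.card Q9 = Nat.card {x // x ∈ F9} :=
    Nat.card_congr (Equiv.subtypeEquivRight (fun x => Iff.rfl))
  rw [h, Nat.card_eq_finsetCard]
  decide

theorem px_mem : px ∈ φ.range := by
  refine ⟨e0 * e1 * e1 * e0 * e0 * e1⁻¹ * e1⁻¹ * e0⁻¹ * e1, ?_⟩
  simp only [map_mul, map_inv, phi_e0, phi_e1]
  decide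

theorem py_mem : py ∈ φ.range := by
  refine ⟨e1 * e1 * e0 * e0 * e1 * e0⁻¹ * e1, ?_⟩
  simp only [map_mul, map_inv, phi_e0, phi_e1]
  decide

theorem pu_mem : pu ∈ φ.range := by
  refine ⟨e0 * e0 * e1⁻¹ * e0 * e1 * e0 * e0 * e1⁻¹, ?_⟩
  simp only [map_mul, map_inv, phi_e0, phi_e1]
  decide

theorem pv_mem : pv ∈ φ.range := by
  refine ⟨e0 * e0 * e1⁻¹ * e0⁻¹ * e1 * e0 * e1⁻¹ * e0⁻¹ * e1⁻¹, ?_⟩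
  simp only [map_mul, map_inv, phi_e0, phi_e1]
  decide

theorem Q8_le : Q8 ≤ φ.range := by
  intro g hg
  have hg' : g ∈ F8 := Finset.mem_coe.mp hg
  have hx := px_mem
  have hy := py_mem
  fin_cases hg'
  · exact one_mem _
  · exact hx
  · exact pow_mem hx 2
  · exact pow_mem hx 3
  · exact hy
  · exact mul_mem hx hy
  · exact mul_mem (pow_mem hx 2) hy
  · exact mul_mem (pow_mem hx 3) hy

theorem Q9_le : Q9 ≤ φ.range := by
  intro g hg
  have hg' : g ∈ F9 := Finset.mem_coe.mp hg
  have hu := pu_mem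
  have hv := pv_mem
  fin_cases hg'
  · exact one_mem _
  · exact hu
  · exact pow_mem hu 2
  · exact hv
  · exact mul_mem hu hv
  · exact mul_mem (pow_mem hu 2) hv
  · exact pow_mem hv 2
  · exact mul_mem hu (pow_mem hv 2)
  · exact mul_mem (pow_mem hu 2) (pow_mem hv 2)

theorem card_alt : Nat.card (alternatingGroup (Fin 7)) = 2520 := by
  have h := two_mul_card_alternatingGroup (α := Fin 7)
  have hp : Fintype.card (Equiv.Perm (Fin 7)) = 5040 := by
    rw [Fintype.card_perm, Fintype.card_fin]
    decide
  rw [hp] at h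
  rw [Nat.card_eq_fintype_card]
  omega

theorem range_eq : φ.range = alternatingGroup (Fin 7) := by
  have hle : φ.range ≤ alternatingGroup (Fin 7) := by
    rintro x ⟨g, rfl⟩
    refine PresentedGroup.induction_on
      (C := fun g => φ g ∈ alternatingGroup (Fin 7)) g ?_
    intro z
    exact lift_mem_alternating z
  haveI : Fact (Nat.Prime 5) := ⟨by norm_num⟩
  haveI : Fact (Nat.Prime 7) := ⟨by norm_num⟩
  have h5 : orderOf pb = 5 := orderOf_eq_prime (by decide) (by decide)
  have h7 : orderOf (pa * pb⁻¹) = 7 := orderOf_eq_prime (by decide) (by decide)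
  have hpb : pb ∈ φ.range := ⟨e1, phi_e1⟩
  have hpab : pa * pb⁻¹ ∈ φ.range := by
    refine ⟨e0 * e1⁻¹, ?_⟩
    rw [map_mul, map_inv, phi_e0, phi_e1]
  have d5 : 5 ∣ Nat.card φ.range := by
    have := Subgroup.orderOf_dvd_natCard φ.range hpb
    rwa [h5] at this
  have d7 : 7 ∣ Nat.card φ.range := by
    have := Subgroup.orderOf_dvd_natCard φ.range hpab
    rwa [h7] at this
  have d8 : 8 ∣ Nat.card φ.range := card_Q8 ▸ Subgroup.card_dvd_of_le Q8_le
  have d9 : 9 ∣ Nat.card φ.range := card_Q9 ▸ Subgroup.card_dvd_of_le Q9_le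
  have d72 : 72 ∣ Nat.card φ.range :=
    Nat.Coprime.mul_dvd_of_dvd_of_dvd (by norm_num) d8 d9
  have d360 : 360 ∣ Nat.card φ.range :=
    Nat.Coprime.mul_dvd_of_dvd_of_dvd (by norm_num) d72 d5
  have d2520 : 2520 ∣ Nat.card φ.range :=
    Nat.Coprime.mul_dvd_of_dvd_of_dvd (by norm_num) d360 d7
  have hpos : 0 < Nat.card φ.range := Nat.card_pos
  refine Subgroup.eq_of_le_of_card_ge hle ?_
  rw [card_alt]
  exact Nat.le_of_dvd hpos d2520

/-! ### Main theorem -/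

theorem exists_index_fifteen_subgroup_with_coset_action_A7 :
    ∃ H : Subgroup Gbar, H.index = 15 ∧
      Nonempty ((MulAction.toPermHom Gbar (Gbar ⧸ H)).range ≃* alternatingGroup (Fin 7)) := by
  refine ⟨H, H_index, ⟨?_⟩⟩
  exact ((QuotientGroup.quotientKerEquivRange (MulAction.toPermHom Gbar (Gbar ⧸ H))).symm.trans
    ((QuotientGroup.quotientMulEquivOfEq ker_eq).trans
      ((QuotientGroup.quotientKerEquivRange φ).trans (MulEquiv.subgroupCongr range_eq))))

end Stmt13
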